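/- arXiv:1511.02378 — 9 statements merged into one kernel-verified Lean document; each statement's English description precedes it below -/
import Mathlib

section
/- Define t_1 = ⌊(n - d_1 - 1)/2⌋ and recursively t_i = ⌊(n - d_i - 1 - t_{i-1})/2⌋ + t_{i-1} for 2 ≤ i ≤ m, where n, d_1, …, d_m are positive integers. Then t_m = (Σ_{j=1}^m 2^{j-1}(n - d_j) - Σ_{j=1}^m 2^{j-1}ε_j - 2^m + 1)/2^m for some ε_1, …, ε_m ∈ {0, 1}. -/
lemma stmt5_fl (a : ℤ) : ⌊((a : ℝ)) / 2⌋ = a / 2 := by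
  have h := Rat.floor_cast (α := ℝ) ((a : ℚ) / 2)
  push_cast at h
  rw [h, show ((a : ℚ) / 2) = ((a : ℚ) / ((2 : ℕ) : ℚ)) by norm_num]
  exact Rat.floor_intCast_div_natCast a 2

lemma stmt5_geom (m : ℕ) : ∑ j ∈ Finset.Icc 1 m, (2 : ℝ) ^ (j - 1) = 2 ^ m - 1 := by
  induction m with
  | zero => simp
  | succ k ih =>
    rw [Finset.sum_Icc_succ_top (by omega), ih]
    simp only [Nat.add_sub_cancel]
    ring

theorem stmt5 (m : ℕ) (hm : 1 ≤ m) (n : ℕ) (hn : 0 < n)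
    (d : ℕ → ℕ) (hd : ∀ j, 0 < d j)
    (t : ℕ → ℤ)
    (ht1 : t 1 = ⌊((n : ℝ) - d 1 - 1) / 2⌋)
    (hti : ∀ i, 2 ≤ i → i ≤ m →
      t i = ⌊((n : ℝ) - d i - 1 - t (i - 1)) / 2⌋ + t (i - 1)) :
    ∃ ε : ℕ → ℤ, (∀ j, 1 ≤ j → j ≤ m → ε j = 0 ∨ ε j = 1) ∧
      (t m : ℝ) = (∑ j ∈ Finset.Icc 1 m, 2 ^ (j - 1) * ((n : ℝ) - d j)
        - ∑ j ∈ Finset.Icc 1 m, 2 ^ (j - 1) * (ε j : ℝ) - 2 ^ m + 1) / 2 ^ m := by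
  set ε : ℕ → ℤ := fun j => if j = 1 then ((n : ℤ) - d 1 - 1) % 2
      else ((n : ℤ) - d j - 1 - t (j - 1)) % 2 with hε
  refine ⟨ε, fun j _ _ => by by_cases h : j = 1 <;> simp only [hε, h, if_true, if_false] <;> omega, ?_⟩
  -- key integer identity
  have key : ∀ i, 1 ≤ i → i ≤ m →
      2 ^ i * t i = ∑ j ∈ Finset.Icc 1 i, 2 ^ (j - 1) * ((n : ℤ) - d j - 1 - ε j) := by
    intro i
    induction i with
    | zero => omega
    | succ k ih =>
      intro _ hkm
      rcases Nat.eq_or_lt_of_le (Nat.one_le_iff_ne_zero.mpr (Nat.succ_ne_zero k)) with h1 | h1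
      · -- k + 1 = 1
        have hk0 : k = 0 := by omega
        subst hk0
        have ht1' : t 1 = ((n : ℤ) - d 1 - 1) / 2 := by
          rw [ht1, show ((n : ℝ) - d 1 - 1) = (((n : ℤ) - d 1 - 1 : ℤ) : ℝ) by push_cast; ring,
            stmt5_fl]
        simp only [Finset.Icc_self, Finset.sum_singleton, hε, if_true, pow_one]
        norm_num
        omega
      · -- k + 1 ≥ 2
        have hk1 : 1 ≤ k := by omega
        have hrec := hti (k + 1) (by omega) hkm
        have htk : t (k + 1) = ((n : ℤ) - d (k + 1) - 1 - t k) / 2 + t k := by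
          rw [hrec, show ((n : ℝ) - d (k + 1) - 1 - t ((k + 1) - 1))
              = (((n : ℤ) - d (k + 1) - 1 - t k : ℤ) : ℝ) by push_cast [Nat.add_sub_cancel]; ring,
            stmt5_fl, Nat.add_sub_cancel]
        have ihk := ih hk1 (by omega)
        rw [Finset.sum_Icc_succ_top (by omega), ← ihk]
        have hεk : ε (k + 1) = ((n : ℤ) - d (k + 1) - 1 - t k) % 2 := by
          simp only [hε, if_neg (by omega : k + 1 ≠ 1), Nat.add_sub_cancel]
        have hdiv : 2 * (((n : ℤ) - d (k + 1) - 1 - t k) / 2)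
            = (n : ℤ) - d (k + 1) - 1 - t k - ε (k + 1) := by rw [hεk]; omega
        simp only [Nat.add_sub_cancel]
        rw [htk]
        linear_combination (2 : ℤ) ^ k * hdiv
  have keym := key m hm le_rfl
  have keyR : (2 : ℝ) ^ m * t m
      = ∑ j ∈ Finset.Icc 1 m, 2 ^ (j - 1) * ((n : ℝ) - d j - 1 - ε j) := by
    have := congrArg (fun z : ℤ => (z : ℝ)) keym
    push_cast at this
    convert this using 2
  have hsplit : ∑ j ∈ Finset.Icc 1 m, (2 : ℝ) ^ (j - 1) * ((n : ℝ) - d j - 1 - ε j)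
      = ∑ j ∈ Finset.Icc 1 m, 2 ^ (j - 1) * ((n : ℝ) - d j)
        - ∑ j ∈ Finset.Icc 1 m, 2 ^ (j - 1) * (ε j : ℝ)
        - ∑ j ∈ Finset.Icc 1 m, (2 : ℝ) ^ (j - 1) := by
    rw [← Finset.sum_sub_distrib, ← Finset.sum_sub_distrib]
    exact Finset.sum_congr rfl fun j _ => by ring
  rw [eq_div_iff (by positivity), mul_comm, keyR, hsplit, stmt5_geom]
  ring
end

section
/- With t_1 = ⌊(n - d_1 - 1)/2⌋ and t_i = ⌊(n - d_i - 1 - t_{i-1})/2⌋ + t_{i-1}, if all d_i equal a common value d̃, then t_m ≥ ((2^m - 1)(n - d̃) - 2^{m+1} + 2)/2^m. -/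
lemma stmt6_aux (y : ℤ) : ((y : ℝ) - 1) / 2 ≤ ((⌊((y : ℝ)) / 2⌋ : ℤ) : ℝ) := by
  have hq : y / 2 ≤ ⌊((y : ℝ)) / 2⌋ := by
    rw [Int.le_floor]
    have : 2 * (y / 2) ≤ y := by omega
    have : ((2 * (y / 2) : ℤ) : ℝ) ≤ (y : ℝ) := by exact_mod_cast this
    push_cast at this ⊢
    linarith
  have h1 : y - 1 ≤ 2 * (y / 2) := by omega
  have h1' : ((y : ℝ) - 1) ≤ 2 * ((y / 2 : ℤ) : ℝ) := by exact_mod_cast h1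
  have hq' : ((y / 2 : ℤ) : ℝ) ≤ (⌊((y : ℝ)) / 2⌋ : ℝ) := by exact_mod_cast hq
  linarith

theorem stmt6 (m : ℕ) (hm : 1 ≤ m) (n D : ℕ) (hD : 0 < D) (hn : D < n)
    (t : ℕ → ℤ)
    (ht1 : t 1 = ⌊((n : ℝ) - D - 1) / 2⌋)
    (hti : ∀ i, 2 ≤ i → i ≤ m →
      t i = ⌊((n : ℝ) - D - 1 - t (i - 1)) / 2⌋ + t (i - 1)) :
    ((2 ^ m - 1) * ((n : ℝ) - D) - 2 ^ (m + 1) + 2) / 2 ^ m ≤ (t m : ℝ) := by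
  revert hti
  induction m, hm using Nat.le_induction with
  | base =>
    intro _
    rw [ht1]
    have h := stmt6_aux ((n:ℤ) - D - 1)
    rw [show ((((n:ℤ) - D - 1 : ℤ)) : ℝ) = ((n : ℝ) - D - 1) by push_cast; ring] at h
    norm_num
    linarith
  | succ i hi ih =>
    intro hti
    have ih' := ih (fun j h2 hj => hti j h2 (by omega))
    have heq := hti (i+1) (by omega) (le_refl _)
    simp only [Nat.add_sub_cancel] at heq
    rw [heq]
    have h := stmt6_aux ((n:ℤ) - D - 1 - t i)
    rw [show ((((n:ℤ) - D - 1 - t i : ℤ)) : ℝ) = ((n : ℝ) - D - 1 - t i) by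
      push_cast; ring] at h
    set F : ℤ := ⌊((n : ℝ) - D - 1 - (t i : ℝ)) / 2⌋ with hF
    have hc : (0:ℝ) < 2 ^ i := by positivity
    have h2 : ((n:ℝ) - D - 1 - t i) - 1 ≤ 2 * (F : ℝ) := by linarith
    rw [div_le_iff₀ hc] at ih'
    rw [div_le_iff₀ (by positivity : (0:ℝ) < 2 ^ (i+1))]
    have hmul := mul_le_mul_of_nonneg_right h2 hc.le
    push_cast
    simp only [pow_succ] at ih' ⊢
    nlinarith [hmul, ih', hc]
end

section
/- Let n, d_0, m be positive integers. Among all nonnegative real tuples (d_1, …, d_m) with d_1 ≤ d_2 ≤ … ≤ d_m, Σ d_j = d_0, and satisfying -Σ_{j=1}^{i-1} 2^{j-1} d_j + 2^{i-1} d_i ≤ n - 1 for all 2 ≤ i ≤ m, the quantity T(d) = (Σ_{j=1}^m 2^{j-1}(n - d_j) - 2^m + 1)/2^m is maximized when d_1 = d_2 = … = d_m = d_0/m, with maximum value ((2^m - 1)(n - d_0/m) - 2^m + 1)/2^m (assuming d_0/m ≤ n - 1). -/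
theorem stmt7 (n d0 m : ℕ) (hn : 0 < n) (hd0 : 0 < d0) (hm : 0 < m)
    (hfeas : (d0 : ℝ) / m ≤ (n : ℝ) - 1)
    (d : ℕ → ℝ) (hpos : ∀ j, 1 ≤ j → j ≤ m → 0 ≤ d j)
    (hmono : ∀ i j, 1 ≤ i → i ≤ j → j ≤ m → d i ≤ d j)
    (hsum : ∑ j ∈ Finset.Icc 1 m, d j = d0)
    (hcon : ∀ i, 2 ≤ i → i ≤ m →
      -(∑ j ∈ Finset.Icc 1 (i - 1), 2 ^ (j - 1) * d j) + 2 ^ (i - 1) * d i ≤ (n : ℝ) - 1) :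
    (∑ j ∈ Finset.Icc 1 m, 2 ^ (j - 1) * ((n : ℝ) - d j) - 2 ^ m + 1) / 2 ^ m
      ≤ ((2 ^ m - 1) * ((n : ℝ) - (d0 : ℝ) / m) - 2 ^ m + 1) / 2 ^ m ∧
    (∑ j ∈ Finset.Icc 1 m, 2 ^ (j - 1) * ((n : ℝ) - (d0 : ℝ) / m) - 2 ^ m + 1) / 2 ^ m
      = ((2 ^ m - 1) * ((n : ℝ) - (d0 : ℝ) / m) - 2 ^ m + 1) / 2 ^ m := by
  have hgeom : ∀ k : ℕ, ∑ j ∈ Finset.Icc 1 k, (2 : ℝ) ^ (j - 1) = 2 ^ k - 1 := by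
    intro k
    induction k with
    | zero => simp
    | succ p ih =>
      rw [Finset.sum_Icc_succ_top (by omega), ih]
      simp only [Nat.add_sub_cancel]
      ring
  have hmR : (0 : ℝ) < m := by exact_mod_cast hm
  have hcheb : ((2 : ℝ) ^ m - 1) * (d0 : ℝ) ≤ m * ∑ j ∈ Finset.Icc 1 m, 2 ^ (j - 1) * d j := by
    have hmv : MonovaryOn (fun j => (2 : ℝ) ^ (j - 1)) d (Finset.Icc 1 m : Finset ℕ) := by
      intro i hi j hj hlt
      simp only [Finset.coe_Icc, Set.mem_Icc] at hi hj
      have hij : i ≤ j := by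
        by_contra h
        exact absurd (hmono j i hj.1 (le_of_not_ge h) hi.2) (not_le.mpr hlt)
      exact pow_le_pow_right₀ (by norm_num) (Nat.sub_le_sub_right hij 1)
    have := hmv.sum_mul_sum_le_card_mul_sum
    rw [hgeom, hsum, Nat.card_Icc] at this
    simpa using this
  have key : ∑ j ∈ Finset.Icc 1 m, (2 : ℝ) ^ (j - 1) * ((n : ℝ) - d j)
      ≤ ((2 : ℝ) ^ m - 1) * ((n : ℝ) - (d0 : ℝ) / m) := by
    have h1 : ∑ j ∈ Finset.Icc 1 m, (2 : ℝ) ^ (j - 1) * ((n : ℝ) - d j)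
        = ((2 : ℝ) ^ m - 1) * n - ∑ j ∈ Finset.Icc 1 m, 2 ^ (j - 1) * d j := by
      simp only [mul_sub]
      rw [Finset.sum_sub_distrib, ← Finset.sum_mul, hgeom]
    rw [h1]
    have h2 : ((2 : ℝ) ^ m - 1) * ((d0 : ℝ) / m) ≤ ∑ j ∈ Finset.Icc 1 m, 2 ^ (j - 1) * d j := by
      rw [mul_div_assoc', div_le_iff₀ hmR]
      nlinarith [hcheb]
    linarith
  refine ⟨div_le_div_of_nonneg_right (by linarith) (by positivity), ?_⟩
  rw [← Finset.sum_mul, hgeom]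
end

section
/- For m = 3: among real triples (d_1, d_2, d_3) with d_1 ≤ d_2 ≤ d_3, d_1 + d_2 + d_3 = d_0, -d_1 + 2d_2 ≤ n - 1, and -d_1 - 2d_2 + 4d_3 ≤ n - 1, the value t_3 = (4(n - d_3) + 2(n - d_2) + (n - d_1) - 7)/8 is maximized at d_1 = d_2 = d_3 = d_0/3, where it equals (7n - 7(d_0/3) - 7)/8 (assuming d_0/3 ≤ n - 1). -/
theorem stmt8 (n d0 : ℝ) (hfeas : d0 / 3 ≤ n - 1)
    (d1 d2 d3 : ℝ) (h12 : d1 ≤ d2) (h23 : d2 ≤ d3)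
    (hsum : d1 + d2 + d3 = d0)
    (hc1 : -d1 + 2 * d2 ≤ n - 1) (hc2 : -d1 - 2 * d2 + 4 * d3 ≤ n - 1) :
    (4 * (n - d3) + 2 * (n - d2) + (n - d1) - 7) / 8 ≤ (7 * n - 7 * (d0 / 3) - 7) / 8 ∧
    (4 * (n - d0 / 3) + 2 * (n - d0 / 3) + (n - d0 / 3) - 7) / 8
      = (7 * n - 7 * (d0 / 3) - 7) / 8 := by
  constructor
  · linarith
  · ring
end

section
/- Let B, k, d, α, β be positive integers with k ≤ d. If B ≤ Σ_{i=0}^{k-1} min(α, (d - i)β) and α = B/k, then necessarily (d - k + 1)β ≥ B/k; consequently the minimum repair bandwidth at the minimum-storage point satisfies γ = dβ ≥ Bd/(k(d - k + 1)). -/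
theorem stmt12 (B k d α β : ℕ) (hB : 0 < B) (hk : 0 < k) (hα : 0 < α) (hβ : 0 < β)
    (hkd : k ≤ d)
    (hcut : (B : ℝ) ≤ ∑ i ∈ Finset.range k, min (α : ℝ) (((d : ℝ) - i) * β))
    (hαval : (α : ℝ) = (B : ℝ) / k) :
    (B : ℝ) / k ≤ ((d : ℝ) - k + 1) * β ∧
    (B : ℝ) * d / (k * ((d : ℝ) - k + 1)) ≤ (d : ℝ) * β := by
  have hk' : (0:ℝ) < k := by exact_mod_cast hk
  have hd : (k:ℝ) ≤ d := by exact_mod_cast hkd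
  have hd' : (0:ℝ) < d := lt_of_lt_of_le hk' hd
  have hβ' : (0:ℝ) < β := by exact_mod_cast hβ
  have hpos : (0:ℝ) < (d:ℝ) - k + 1 := by linarith
  have hcast : ((k-1 : ℕ) : ℝ) = (k:ℝ) - 1 := by
    have := Nat.cast_sub (R := ℝ) hk
    simpa using this
  rw [hαval] at hcut
  have key : (B:ℝ) / k ≤ ((d:ℝ) - k + 1) * β := by
    by_contra h
    push_neg at h
    have hmem : k - 1 ∈ Finset.range k := Finset.mem_range.mpr (by omega)
    have hlt : ∑ i ∈ Finset.range k, min ((B:ℝ)/k) (((d : ℝ) - i) * β)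
        < ∑ _i ∈ Finset.range k, ((B:ℝ)/k) := by
      refine Finset.sum_lt_sum (fun i _ => min_le_left _ _) ⟨k-1, hmem, ?_⟩
      calc min ((B:ℝ)/k) (((d : ℝ) - (k-1:ℕ)) * β) ≤ ((d : ℝ) - (k-1:ℕ)) * β :=
            min_le_right _ _
        _ = ((d:ℝ) - k + 1) * β := by rw [hcast]; ring
        _ < (B:ℝ)/k := h
    rw [Finset.sum_const, Finset.card_range, nsmul_eq_mul] at hlt
    have heq : (k:ℝ) * ((B:ℝ)/k) = B := by field_simp
    rw [heq] at hlt
    linarith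
  refine ⟨key, ?_⟩
  rw [div_le_iff₀ (by positivity)]
  have hB' : (B:ℝ) ≤ k * (((d:ℝ) - k + 1) * β) := by
    rw [div_le_iff₀ hk'] at key
    linarith [key]
  nlinarith [hB', hd']
end

section
/- Let n > d ≥ 2 and let Ψ = [Φ | ΛΦ] be an n × d matrix over a finite field F_q, where Φ is the n × (d/2) Vandermonde matrix with rows (1, g^i, g^{2i}, …, g^{i(d/2-1)}) for a primitive element g of F_q with n ≤ q - 1, and Λ = diag(λ_1, …, λ_n) with distinct nonzero λ_i chosen so that any d rows of Ψ are linearly independent. Then for any fixed row index z, the vector p with entries p_i = ψ_i M φ_z^T (i ≠ z), where M = [S_1; S_2] for symmetric (d/2)×(d/2) matrices S_1, S_2, is a codeword of an (n-1, d) MDS code with minimum distance n - d; hence any pattern of e errors and f erasures with 2e + f ≤ n - d - 1 in the helper responses can be corrected. -/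
theorem stmt14 (q n d αp : ℕ) (F : Type) [Field F] [Fintype F] [DecidableEq F]
    (hq : Fintype.card F = q) (hn : n ≤ q - 1) (hd2 : 2 ≤ d) (hdn : d < n)
    (hdα : d = 2 * αp)
    (g : F) (hg : ∀ x : F, x ≠ 0 → ∃ k : ℕ, g ^ k = x)
    (lam : Fin n → F) (hlam0 : ∀ i, lam i ≠ 0) (hlaminj : Function.Injective lam)
    (Φ : Matrix (Fin n) (Fin αp) F) (hΦ : ∀ i j, Φ i j = g ^ ((i : ℕ) * (j : ℕ)))
    (Ψ : Matrix (Fin n) (Fin αp ⊕ Fin αp) F)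
    (hΨ : Ψ = Matrix.fromCols Φ (Matrix.of fun i j => lam i * Φ i j))
    (hrows : ∀ s : Finset (Fin n), s.card = d →
      LinearIndependent F (fun i : {x // x ∈ s} => Ψ (i : Fin n)))
    (S1 S2 : Matrix (Fin αp) (Fin αp) F) (hS1 : S1.IsSymm) (hS2 : S2.IsSymm)
    (M : Matrix (Fin αp ⊕ Fin αp) (Fin αp) F) (hM : M = Matrix.fromRows S1 S2)
    (z : Fin n) (p : Fin n → F)
    (hp : ∀ i, p i = (Ψ * M).mulVec (fun j => Φ z j) i) :
    (Finset.univ.erase z).card = n - 1 ∧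
    (∃ v : Fin αp ⊕ Fin αp → F, ∀ i, p i = Ψ.mulVec v i) ∧
    (∀ v w : Fin αp ⊕ Fin αp → F, v ≠ w →
      n - d ≤ ((Finset.univ.erase z).filter
        (fun i => Ψ.mulVec v i ≠ Ψ.mulVec w i)).card) ∧
    (∀ v w : Fin αp ⊕ Fin αp → F, ∀ E : Finset (Fin n), E ⊆ Finset.univ.erase z →
      ∀ e f : ℕ, E.card = f → 2 * e + f ≤ n - d - 1 →
      (((Finset.univ.erase z).filter (fun i => Ψ.mulVec v i ≠ Ψ.mulVec w i)) \ E).card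
        ≤ 2 * e →
      v = w) := by
  have hcard1 : (Finset.univ.erase z).card = n - 1 := by
    rw [Finset.card_erase_of_mem (Finset.mem_univ z), Finset.card_univ, Fintype.card_fin]
  have hdist : ∀ v w : Fin αp ⊕ Fin αp → F, v ≠ w →
      n - d ≤ ((Finset.univ.erase z).filter
        (fun i => Ψ.mulVec v i ≠ Ψ.mulVec w i)).card := by
    intro v w hvw
    by_contra hlt
    push_neg at hlt
    set D := (Finset.univ.erase z).filter (fun i => Ψ.mulVec v i ≠ Ψ.mulVec w i) with hD
    set Z := Finset.univ.erase z \ D with hZ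
    have hDsub : D ⊆ Finset.univ.erase z := Finset.filter_subset _ _
    have hZcard : Z.card = (n - 1) - D.card := by
      rw [hZ, Finset.card_sdiff_of_subset hDsub, hcard1]
    have hdZ : d ≤ Z.card := by omega
    obtain ⟨s, hssub, hscard⟩ := Finset.exists_subset_card_eq hdZ
    have hli := hrows s hscard
    set u : Fin αp ⊕ Fin αp → F := v - w with hu
    have hu0 : u ≠ 0 := sub_ne_zero.mpr hvw
    have hzero : ∀ i ∈ s, dotProduct (Ψ i) u = 0 := by
      intro i his
      have hiZ := hssub his
      rw [hZ, Finset.mem_sdiff, hD, Finset.mem_filter] at hiZ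
      have : Ψ.mulVec v i = Ψ.mulVec w i := by
        by_contra hne
        exact hiZ.2 ⟨hiZ.1, hne⟩
      have : Ψ.mulVec u i = 0 := by
        rw [hu, Matrix.mulVec_sub]
        simpa [sub_eq_zero] using this
      simpa [Matrix.mulVec] using this
    have hcards : Fintype.card {x // x ∈ s} =
        Module.finrank F (Fin αp ⊕ Fin αp → F) := by
      rw [Fintype.card_coe, hscard, Module.finrank_fintype_fun_eq_card,
        Fintype.card_sum, Fintype.card_fin]
      omega
    have hsne : s.Nonempty := Finset.card_pos.mp (by omega)
    haveI : Nonempty {x // x ∈ s} := ⟨⟨hsne.choose, hsne.choose_spec⟩⟩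
    let b := basisOfLinearIndependentOfCardEqFinrank hli hcards
    have hb : ∀ i, b i = Ψ (i : Fin n) := fun i => by
      simp [b, coe_basisOfLinearIndependentOfCardEqFinrank]
    let L : (Fin αp ⊕ Fin αp → F) →ₗ[F] F :=
      { toFun := fun x => dotProduct x u
        map_add' := fun a c => add_dotProduct a c u
        map_smul' := fun c a => smul_dotProduct c a u }
    have hL : L = 0 := by
      apply b.ext
      intro i
      simp only [L, LinearMap.coe_mk, AddHom.coe_mk, hb, LinearMap.zero_apply]
      exact hzero i i.2
    apply hu0
    funext j
    have := congrArg (fun f => f (Pi.single j (1 : F))) hL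
    simpa [L, single_dotProduct] using this
  refine ⟨hcard1, ⟨M.mulVec (fun j => Φ z j), fun i => by
    rw [hp i, ← Matrix.mulVec_mulVec]⟩, hdist, ?_⟩
  intro v w E hE e f hEf hef hsd
  by_contra hvw
  have h1 := hdist v w hvw
  set D := (Finset.univ.erase z).filter (fun i => Ψ.mulVec v i ≠ Ψ.mulVec w i) with hD
  have h2 : D.card ≤ (D \ E).card + E.card := by
    calc D.card ≤ ((D \ E) ∪ E).card := Finset.card_le_card (by
      intro x hx
      by_cases hxE : x ∈ E
      · exact Finset.mem_union_right _ hxE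
      · exact Finset.mem_union_left _ (Finset.mem_sdiff.mpr ⟨hx, hxE⟩))
    _ ≤ (D \ E).card + E.card := Finset.card_union_le _ _
  omega
end

section
/- Let n, d, M, P, P_det, B_F, B_H, B_L be given with B_F, B_H, B_L > 0 and B_F > θ_L* B_L where θ_L* = log(1 - P_det^{1/M})/log(1-P). Among all pairs (θ_H, θ_L) of nonnegative reals satisfying B_F = θ_H B_H + θ_L B_L and (1 - (1-P)^{θ_L})^M ≥ P_det, the sum θ_H + θ_L is minimized at θ_L = θ_L* and θ_H = (B_F - θ_L* B_L)/B_H, provided B_L < B_H. -/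
theorem stmt16 (P Pdet : ℝ) (hP0 : 0 < P) (hP1 : P < 1) (hPd0 : 0 < Pdet) (hPd1 : Pdet < 1)
    (M : ℕ) (hM : 0 < M) (BF BH BLs : ℝ) (hBF : 0 < BF) (hBH : 0 < BH) (hBL : 0 < BLs)
    (hBLH : BLs < BH)
    (θLs : ℝ) (hθLs : θLs = Real.log (1 - Pdet ^ ((1 : ℝ) / M)) / Real.log (1 - P))
    (hbig : θLs * BLs < BF) :
    (Pdet ≤ (1 - (1 - P) ^ θLs) ^ M ∧ BF = ((BF - θLs * BLs) / BH) * BH + θLs * BLs) ∧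
    ∀ θH θL : ℝ, 0 ≤ θH → 0 ≤ θL → BF = θH * BH + θL * BLs →
      Pdet ≤ (1 - (1 - P) ^ θL) ^ M →
      (BF - θLs * BLs) / BH + θLs ≤ θH + θL := by
  have hq0 : (0:ℝ) < 1 - P := by linarith
  have hq1 : 1 - P < 1 := by linarith
  have hlogq : Real.log (1 - P) < 0 := Real.log_neg hq0 hq1
  have hr0 : (0:ℝ) < Pdet ^ ((1:ℝ)/M) := Real.rpow_pos_of_pos hPd0 _
  have hr1 : Pdet ^ ((1:ℝ)/M) < 1 := by
    apply Real.rpow_lt_one hPd0.le hPd1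
    positivity
  have hMne : (M:ℝ) ≠ 0 := Nat.cast_ne_zero.mpr hM.ne'
  have hs0 : (0:ℝ) < 1 - Pdet ^ ((1:ℝ)/M) := by linarith
  have key : (1 - P) ^ θLs = 1 - Pdet ^ ((1:ℝ)/M) := by
    rw [hθLs, Real.rpow_def_of_pos hq0, mul_comm, div_mul_cancel₀ _ hlogq.ne,
      Real.exp_log hs0]
  constructor
  · constructor
    · rw [key]
      have : (1 - (1 - Pdet ^ ((1:ℝ)/M))) = Pdet ^ ((1:ℝ)/M) := by ring
      rw [this, ← Real.rpow_natCast (Pdet ^ ((1:ℝ)/M)) M, ← Real.rpow_mul hPd0.le,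
        one_div, inv_mul_cancel₀ hMne, Real.rpow_one]
    · field_simp
      ring
  · intro θH θL hθH hθL heq hcon
    have hqθL : (1 - P) ^ θL ≤ 1 := Real.rpow_le_one hq0.le hq1.le hθL
    have hqθLpos : (0:ℝ) < (1 - P) ^ θL := Real.rpow_pos_of_pos hq0 _
    -- from constraint: Pdet^{1/M} ≤ 1 - q^θL
    have h1 : Pdet ^ ((1:ℝ)/M) ≤ 1 - (1 - P) ^ θL := by
      have := Real.rpow_le_rpow hPd0.le hcon (by positivity : (0:ℝ) ≤ 1/M)
      rwa [← Real.rpow_natCast (1 - (1 - P) ^ θL) M, ← Real.rpow_mul (by linarith),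
        mul_one_div, div_self hMne, Real.rpow_one] at this
    have h2 : (1 - P) ^ θL ≤ 1 - Pdet ^ ((1:ℝ)/M) := by linarith
    have h3 : θL * Real.log (1 - P) ≤ Real.log (1 - Pdet ^ ((1:ℝ)/M)) := by
      have := Real.log_le_log hqθLpos h2
      rwa [Real.log_rpow hq0] at this
    have hθLsle : θLs ≤ θL := by
      rw [hθLs, div_le_iff_of_neg hlogq]
      linarith [h3]
    rw [div_add' _ _ _ hBH.ne', div_le_iff₀ hBH]
    nlinarith [mul_le_mul_of_nonneg_left (sub_nonneg.mpr hθLsle) (by linarith : (0:ℝ) ≤ BH - BLs)]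
end

section
/- Let C and D be α × α matrices over a field and λ_1, …, λ_α pairwise distinct scalars with Λ = diag(λ_1, …, λ_α). If C and D are both symmetric and R̂ = C + ΛD is known, then for every pair i ≠ j the off-diagonal entries C_{i,j} and D_{i,j} are uniquely determined by the 2×2 linear system C_{i,j} + λ_i D_{i,j} = R̂_{i,j}, C_{i,j} + λ_j D_{i,j} = R̂_{j,i}, which is invertible since λ_i ≠ λ_j. -/
theorem stmt17 (α : ℕ) (K : Type) [Field K]
    (C D : Matrix (Fin α) (Fin α) K) (hC : C.IsSymm) (hD : D.IsSymm)
    (lam : Fin α → K) (hlam : Function.Injective lam)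
    (R : Matrix (Fin α) (Fin α) K) (hR : R = C + Matrix.diagonal lam * D) :
    ∀ i j : Fin α, i ≠ j → ∀ c d : K,
      (c + lam i * d = R i j ∧ c + lam j * d = R j i) ↔ (c = C i j ∧ d = D i j) := by
  intro i j hij c d
  have hCs : C j i = C i j := by
    exact hC.apply j i ▸ rfl
  have hDs : D j i = D i j := by
    exact hD.apply j i ▸ rfl
  have hRij : R i j = C i j + lam i * D i j := by
    simp [hR, Matrix.add_apply, Matrix.diagonal_mul]
  have hRji : R j i = C i j + lam j * D i j := by
    simp [hR, Matrix.add_apply, Matrix.diagonal_mul, hCs, hDs]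
  have hne : lam i ≠ lam j := fun h => hij (hlam h)
  constructor
  · rintro ⟨h1, h2⟩
    rw [hRij] at h1; rw [hRji] at h2
    have hd : d = D i j := by
      have : (lam i - lam j) * d = (lam i - lam j) * D i j := by ring_nf; linear_combination h1 - h2
      exact mul_left_cancel₀ (sub_ne_zero.mpr hne) this
    subst hd
    constructor
    · exact add_right_cancel h1
    · rfl
  · rintro ⟨hc, hd⟩
    subst hc; subst hd
    exact ⟨hRij.symm, hRji.symm⟩
end

section
/- Let t_0 and n be positive integers and m ≥ 1. Among nonnegative real tuples (d_1, …, d_m) with d_1 ≤ … ≤ d_m satisfying the layered error-correction constraints (with ε_j = 0) and achieving total corrected errors t_m = (Σ_{j=1}^m 2^{j-1}(n - d_j) - 2^m + 1)/2^m = t_0, the sum Σ_{j=1}^m d_j is maximized when d_1 = … = d_m, and then each d_i = n - (2^m t_0 + 2^m - 1)/(2^m - 1). -/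
theorem stmt18 (n t0 m : ℕ) (hn : 0 < n) (ht0 : 0 < t0) (hm : 1 ≤ m)
    (d : ℕ → ℝ) (hpos : ∀ j, 1 ≤ j → j ≤ m → 0 ≤ d j)
    (hmono : ∀ i j, 1 ≤ i → i ≤ j → j ≤ m → d i ≤ d j)
    (hcon : ∀ i, 2 ≤ i → i ≤ m →
      -(∑ j ∈ Finset.Icc 1 (i - 1), 2 ^ (j - 1) * d j) + 2 ^ (i - 1) * d i ≤ (n : ℝ) - 1)
    (htm : (∑ j ∈ Finset.Icc 1 m, 2 ^ (j - 1) * ((n : ℝ) - d j) - 2 ^ m + 1) / 2 ^ m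
      = (t0 : ℝ)) :
    (∑ j ∈ Finset.Icc 1 m, d j
      ≤ m * ((n : ℝ) - (2 ^ m * t0 + 2 ^ m - 1) / (2 ^ m - 1))) ∧
    (∑ j ∈ Finset.Icc 1 m, 2 ^ (j - 1) *
        ((n : ℝ) - ((n : ℝ) - (2 ^ m * (t0 : ℝ) + 2 ^ m - 1) / (2 ^ m - 1))) - 2 ^ m + 1)
        / 2 ^ m = (t0 : ℝ) := by
  have h2m : (2:ℝ) ≤ 2 ^ m := by
    calc (2:ℝ) = 2 ^ 1 := by norm_num
    _ ≤ 2 ^ m := by exact pow_le_pow_right₀ (by norm_num) hm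
  have h2pos : (0:ℝ) < 2 ^ m - 1 := by linarith
  have h2ne : (2:ℝ) ^ m - 1 ≠ 0 := ne_of_gt h2pos
  have h2mne : (2:ℝ) ^ m ≠ 0 := by positivity
  -- sum of weights
  have hsumw : ∑ j ∈ Finset.Icc 1 m, (2:ℝ) ^ (j - 1) = 2 ^ m - 1 := by
    clear * -
    induction m with
    | zero => simp
    | succ k ih =>
      rw [Finset.sum_Icc_succ_top (by omega)]
      rw [ih]
      have : (2:ℝ) ^ (k + 1 - 1) = 2 ^ k := by norm_num
      rw [this, pow_succ]
      ring
  -- weighted sum value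
  have hW : ∑ j ∈ Finset.Icc 1 m, (2:ℝ) ^ (j - 1) * d j
      = (2 ^ m - 1) * n - (2 ^ m * t0 + 2 ^ m - 1) := by
    have h1 : ∑ j ∈ Finset.Icc 1 m, (2:ℝ) ^ (j - 1) * ((n : ℝ) - d j)
        = (2 ^ m - 1) * n - ∑ j ∈ Finset.Icc 1 m, (2:ℝ) ^ (j - 1) * d j := by
      rw [← hsumw, Finset.sum_mul, ← Finset.sum_sub_distrib]
      exact Finset.sum_congr rfl fun j _ => by ring
    have htm' := htm
    rw [div_eq_iff h2mne, h1] at htm'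
    linarith
  have hcard : (Finset.Icc 1 m).card = m := by simp
  -- Chebyshev
  have hmv : MonovaryOn (fun j => (2:ℝ) ^ (j - 1)) d (Finset.Icc 1 m) := by
    intro i hi j hj hlt
    simp only [Finset.coe_Icc, Set.mem_Icc] at hi hj
    have hij : i ≤ j := by
      by_contra h
      exact absurd (hmono j i hj.1 (by omega) hi.2) (not_le.mpr hlt)
    exact pow_le_pow_right₀ (by norm_num) (by omega)
  have hcheb := hmv.sum_mul_sum_le_card_mul_sum
  rw [hsumw, hcard, hW] at hcheb
  constructor
  · have heq : (m : ℝ) * ((n : ℝ) - (2 ^ m * t0 + 2 ^ m - 1) / (2 ^ m - 1))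
        = (m * ((2 ^ m - 1) * n - (2 ^ m * t0 + 2 ^ m - 1))) / (2 ^ m - 1) := by
      field_simp
      try ring
      try tauto
    rw [heq, le_div_iff₀ h2pos]
    nlinarith [hcheb]
  · have hc : ∑ j ∈ Finset.Icc 1 m, (2:ℝ) ^ (j - 1) *
        ((n : ℝ) - ((n : ℝ) - (2 ^ m * (t0 : ℝ) + 2 ^ m - 1) / (2 ^ m - 1)))
        = (2 ^ m - 1) * ((2 ^ m * (t0 : ℝ) + 2 ^ m - 1) / (2 ^ m - 1)) := by
      calc ∑ j ∈ Finset.Icc 1 m, (2:ℝ) ^ (j - 1) *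
            ((n : ℝ) - ((n : ℝ) - (2 ^ m * (t0 : ℝ) + 2 ^ m - 1) / (2 ^ m - 1)))
          = ∑ j ∈ Finset.Icc 1 m, (2:ℝ) ^ (j - 1) *
            ((2 ^ m * (t0 : ℝ) + 2 ^ m - 1) / (2 ^ m - 1)) :=
            Finset.sum_congr rfl fun j _ => by ring
        _ = (∑ j ∈ Finset.Icc 1 m, (2:ℝ) ^ (j - 1)) *
            ((2 ^ m * (t0 : ℝ) + 2 ^ m - 1) / (2 ^ m - 1)) := by rw [Finset.sum_mul]
        _ = _ := by rw [hsumw]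
    rw [hc, mul_div_cancel₀ _ h2ne]
    field_simp
    ring
end
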